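/- arXiv:math/0302162 — 6 statements merged into one kernel-verified Lean document; each statement's English description precedes it below -/
import Mathlib

section
/- For a function φ : ℝ → ℝ such that for every δ ∈ ℝ, |φ(t+δ) − φ(t)| → 0 as t → ∞, and φ = μ + v where μ is monotone and v is uniformly continuous on some interval (τ₀, ∞): for every ε > 0 there exists τ such that for all t, t' ≥ τ, |φ(t) − φ(t')| < ε + ε|t − t'|. -/
/-- Lemma 3, part I. -/
theorem stmt_2 (φ μ g : ℝ → ℝ) (τ₀ : ℝ)
    (hlim : ∀ δ : ℝ, Filter.Tendsto (fun t => |φ (t + δ) - φ t|) Filter.atTop (nhds 0))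
    (hdecomp : ∀ t ∈ Set.Ioi τ₀, φ t = μ t + g t)
    (hμ : MonotoneOn μ (Set.Ioi τ₀) ∨ AntitoneOn μ (Set.Ioi τ₀))
    (hg : UniformContinuousOn g (Set.Ioi τ₀)) :
    ∀ ε > 0, ∃ τ : ℝ, ∀ t t' : ℝ, τ ≤ t → τ ≤ t' →
      |φ t - φ t'| < ε + ε * |t - t'| := by
  intro ε hε
  obtain ⟨h, hh, hgc⟩ := (Metric.uniformContinuousOn_iff.mp hg) (ε / 3) (by positivity)
  set h' : ℝ := h / 2 with hh'def
  have hh' : 0 < h' := by positivity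
  have hη : 0 < min (ε * h') (ε / 3) := lt_min (by positivity) (by positivity)
  obtain ⟨T₀, hT⟩ := Metric.tendsto_atTop.mp (hlim h') _ hη
  set T : ℝ := max T₀ (τ₀ + 1) with hTdef
  have hTφ : ∀ s : ℝ, T ≤ s → |φ (s + h') - φ s| < min (ε * h') (ε / 3) := by
    intro s hs
    have := hT s (le_trans (le_max_left _ _) hs)
    simpa [Real.dist_eq] using this
  have hTτ₀ : ∀ s : ℝ, T ≤ s → s ∈ Set.Ioi τ₀ := by
    intro s hs
    have : τ₀ + 1 ≤ s := le_trans (le_max_right _ _) hs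
    simp only [Set.mem_Ioi]; linarith
  -- small gap estimate
  have key : ∀ a b : ℝ, T ≤ a → a ≤ b → b - a ≤ h' → |φ b - φ a| < ε := by
    intro a b ha hab hba
    have haI : a ∈ Set.Ioi τ₀ := hTτ₀ a ha
    have hbI : b ∈ Set.Ioi τ₀ := hTτ₀ b (le_trans ha hab)
    have hahI : a + h' ∈ Set.Ioi τ₀ := hTτ₀ _ (by linarith)
    have hgab : |g b - g a| < ε / 3 := by
      have := hgc b hbI a haI (by
        rw [Real.dist_eq]
        have : |b - a| ≤ h' := by rw [abs_of_nonneg (by linarith)]; exact hba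
        calc |b - a| ≤ h' := this
          _ < h := by rw [hh'def]; linarith)
      simpa [Real.dist_eq] using this
    have hgah : |g (a + h') - g a| < ε / 3 := by
      have := hgc (a + h') hahI a haI (by
        rw [Real.dist_eq]
        have : |a + h' - a| = h' := by rw [abs_of_nonneg (by linarith)]; ring_nf
        rw [this, hh'def]; linarith)
      simpa [Real.dist_eq] using this
    have hφah : |φ (a + h') - φ a| < ε / 3 := lt_of_lt_of_le (hTφ a ha) (min_le_right _ _)
    have hbmem : b ≤ a + h' := by linarith
    have hμah : μ (a + h') - μ a = (φ (a + h') - φ a) - (g (a + h') - g a) := by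
      rw [hdecomp _ hahI, hdecomp _ haI]; ring
    have hμb : |μ b - μ a| ≤ |φ (a + h') - φ a| + |g (a + h') - g a| := by
      rcases hμ with hm | hm
      · have h1 : μ a ≤ μ b := hm haI hbI hab
        have h2 : μ b ≤ μ (a + h') := hm hbI hahI hbmem
        have : |μ b - μ a| ≤ μ (a + h') - μ a := by
          rw [abs_of_nonneg (by linarith)]; linarith
        calc |μ b - μ a| ≤ μ (a + h') - μ a := this
          _ = (φ (a + h') - φ a) - (g (a + h') - g a) := hμah
          _ ≤ |φ (a + h') - φ a| + |g (a + h') - g a| := by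
              have := abs_sub (φ (a + h') - φ a) (g (a + h') - g a)
              have h3 := le_abs_self ((φ (a + h') - φ a) - (g (a + h') - g a))
              calc (φ (a + h') - φ a) - (g (a + h') - g a)
                  ≤ |(φ (a + h') - φ a) - (g (a + h') - g a)| := h3
                _ ≤ |φ (a + h') - φ a| + |g (a + h') - g a| := abs_sub _ _
      · have h1 : μ b ≤ μ a := hm haI hbI hab
        have h2 : μ (a + h') ≤ μ b := hm hbI hahI hbmem
        have : |μ b - μ a| ≤ μ a - μ (a + h') := by
          rw [abs_of_nonpos (by linarith)]; linarith
        calc |μ b - μ a| ≤ μ a - μ (a + h') := this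
          _ = -((φ (a + h') - φ a) - (g (a + h') - g a)) := by linarith [hμah]
          _ ≤ |(φ (a + h') - φ a) - (g (a + h') - g a)| := neg_le_abs _
          _ ≤ |φ (a + h') - φ a| + |g (a + h') - g a| := abs_sub _ _
    have hφb : |φ b - φ a| ≤ |μ b - μ a| + |g b - g a| := by
      rw [hdecomp _ hbI, hdecomp _ haI]
      have : μ b + g b - (μ a + g a) = (μ b - μ a) + (g b - g a) := by ring
      rw [this]; exact abs_add_le _ _
    calc |φ b - φ a| ≤ |μ b - μ a| + |g b - g a| := hφb
      _ ≤ (|φ (a + h') - φ a| + |g (a + h') - g a|) + |g b - g a| := by linarith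
      _ < ε / 3 + ε / 3 + ε / 3 := by linarith
      _ = ε := by ring
  -- single step estimate
  have step : ∀ s : ℝ, T ≤ s → |φ (s + h') - φ s| ≤ ε * h' :=
    fun s hs => le_of_lt (lt_of_lt_of_le (hTφ s hs) (min_le_left _ _))
  -- iterated step estimate
  have iter : ∀ n : ℕ, ∀ s : ℝ, T ≤ s → |φ (s + n * h') - φ s| ≤ n * (ε * h') := by
    intro n
    induction n with
    | zero => intro s _; simp
    | succ n ih =>
      intro s hs
      have h1 : |φ (s + n * h') - φ s| ≤ n * (ε * h') := ih s hs
      have h2 : |φ (s + n * h' + h') - φ (s + n * h')| ≤ ε * h' := by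
        apply step
        have : (0:ℝ) ≤ n * h' := by positivity
        linarith
      have heq : s + (n + 1 : ℕ) * h' = s + n * h' + h' := by push_cast; ring
      rw [heq]
      calc |φ (s + n * h' + h') - φ s|
          ≤ |φ (s + n * h' + h') - φ (s + n * h')| + |φ (s + n * h') - φ s| :=
            abs_sub_le _ _ _
        _ ≤ ε * h' + n * (ε * h') := by linarith
        _ = (n + 1 : ℕ) * (ε * h') := by push_cast; ring
  -- main estimate for ordered pairs
  have main : ∀ t t' : ℝ, T ≤ t → t ≤ t' → |φ t' - φ t| < ε + ε * |t' - t| := by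
    intro t t' ht htt
    set n : ℕ := ⌊(t' - t) / h'⌋₊ with hn
    have hnle : (n : ℝ) * h' ≤ t' - t := by
      have h1 : (n : ℝ) ≤ (t' - t) / h' := Nat.floor_le (div_nonneg (by linarith) hh'.le)
      calc (n : ℝ) * h' ≤ ((t' - t) / h') * h' := by nlinarith
        _ = t' - t := by field_simp
    have hnlt : t' - t < (n + 1 : ℝ) * h' := by
      have h1 : (t' - t) / h' < n + 1 := Nat.lt_floor_add_one _
      calc t' - t = ((t' - t) / h') * h' := by field_simp
        _ < (n + 1 : ℝ) * h' := by nlinarith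
    have ha : T ≤ t + n * h' := by
      have : (0:ℝ) ≤ (n:ℝ) * h' := mul_nonneg (Nat.cast_nonneg n) hh'.le
      linarith
    have h1 : |φ (t + n * h') - φ t| ≤ n * (ε * h') := iter n t ht
    have h2 : |φ t' - φ (t + n * h')| < ε := key (t + n * h') t' ha (by linarith) (by linarith)
    have habs : |t' - t| = t' - t := abs_of_nonneg (by linarith)
    calc |φ t' - φ t| ≤ |φ t' - φ (t + n * h')| + |φ (t + n * h') - φ t| := abs_sub_le _ _ _
      _ < ε + n * (ε * h') := by linarith
      _ ≤ ε + ε * (t' - t) := by nlinarith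
      _ = ε + ε * |t' - t| := by rw [habs]
  refine ⟨T, fun t t' ht ht' => ?_⟩
  rcases le_total t t' with hle | hle
  · have := main t t' ht hle
    rwa [abs_sub_comm (φ t) (φ t'), abs_sub_comm t t']
  · exact main t' t ht' hle
end

section
/- Under the same hypotheses as the previous statement, for every ε > 0 there exists τ such that |φ(t)| < ε·t for all t ≥ τ; in other words φ(t)/t → 0 as t → ∞. -/
/-- A uniformly continuous function on `Ioi τ₀` is bounded on `[T, T+1]` for `T > τ₀`. -/
lemma ucBoundAux (g : ℝ → ℝ) (τ₀ T : ℝ) (hT : τ₀ < T)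
    (hg : UniformContinuousOn g (Set.Ioi τ₀)) :
    ∃ M : ℝ, ∀ s : ℝ, T ≤ s → s ≤ T + 1 → |g s| ≤ M := by
  obtain ⟨δ, hδ, H⟩ := Metric.uniformContinuousOn_iff.mp hg 1 one_pos
  have key : ∀ n : ℕ, ∀ s : ℝ, T ≤ s → s ≤ T + n * (δ / 2) → |g s - g T| ≤ n := by
    intro n
    induction n with
    | zero =>
      intro s hs1 hs2
      have : s = T := le_antisymm (by simpa using hs2) hs1
      simp [this]
    | succ n ih =>
      intro s hs1 hs2
      set s' := max T (s - δ / 2) with hs'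
      have h1 : T ≤ s' := le_max_left _ _
      have h2 : s' ≤ T + n * (δ / 2) := by
        apply max_le
        · nlinarith
        · push_cast at hs2 ⊢; nlinarith
      have h3 : s' ≤ s := max_le hs1 (by linarith)
      have h4 : s - s' ≤ δ / 2 := by
        have := le_max_right T (s - δ / 2)
        linarith
      have hmem : s ∈ Set.Ioi τ₀ := lt_of_lt_of_le hT hs1
      have hmem' : s' ∈ Set.Ioi τ₀ := lt_of_lt_of_le hT h1
      have hdist : dist s s' < δ := by
        rw [Real.dist_eq, abs_of_nonneg (by linarith)]
        linarith
      have hstep : |g s - g s'| < 1 := by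
        have := H s hmem s' hmem' hdist
        rwa [Real.dist_eq] at this
      have := ih s' h1 h2
      calc |g s - g T| ≤ |g s - g s'| + |g s' - g T| := abs_sub_le _ _ _
        _ ≤ 1 + n := by linarith
        _ = ((n + 1 : ℕ) : ℝ) := by push_cast; ring
  set N : ℕ := ⌈2 / δ⌉₊ with hN
  refine ⟨|g T| + N, fun s hs1 hs2 => ?_⟩
  have hN2 : (2 / δ : ℝ) ≤ N := Nat.le_ceil _
  have hs2' : s ≤ T + N * (δ / 2) := by
    have : (1 : ℝ) ≤ N * (δ / 2) := by
      rw [div_le_iff₀ hδ] at hN2; nlinarith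
    linarith
  have := key N s hs1 hs2'
  have habs : |g s| - |g T| ≤ |g s - g T| := abs_sub_abs_le_abs_sub _ _
  linarith

/-- Lemma 3, part III: under the same hypotheses, `φ t / t → 0`. -/
theorem stmt_3 (φ μ g : ℝ → ℝ) (τ₀ : ℝ)
    (hlim : ∀ δ : ℝ, Filter.Tendsto (fun t => |φ (t + δ) - φ t|) Filter.atTop (nhds 0))
    (hdecomp : ∀ t ∈ Set.Ioi τ₀, φ t = μ t + g t)
    (hμ : MonotoneOn μ (Set.Ioi τ₀) ∨ AntitoneOn μ (Set.Ioi τ₀))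
    (hg : UniformContinuousOn g (Set.Ioi τ₀)) :
    ∀ ε > 0, ∃ τ : ℝ, ∀ t : ℝ, τ ≤ t → |φ t| < ε * t := by
  intro ε hε
  -- increments eventually small
  obtain ⟨T₀, hT₀⟩ := Metric.tendsto_atTop.mp (hlim 1) (ε / 2) (half_pos hε)
  have hinc : ∀ t : ℝ, T₀ ≤ t → |φ (t + 1) - φ t| < ε / 2 := by
    intro t ht
    have := hT₀ t ht
    rw [Real.dist_eq, sub_zero, abs_abs] at this
    exact this
  set T₁ : ℝ := max T₀ (τ₀ + 1) with hT₁def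
  have hT₁τ : τ₀ < T₁ := lt_of_lt_of_le (by linarith) (le_max_right _ _)
  have hT₁T₀ : T₀ ≤ T₁ := le_max_left _ _
  -- bound μ on [T₁, T₁+1]
  have hμbound : ∀ s : ℝ, T₁ ≤ s → s ≤ T₁ + 1 → |μ s| ≤ max |μ T₁| |μ (T₁ + 1)| := by
    intro s hs1 hs2
    have hm1 : T₁ ∈ Set.Ioi τ₀ := hT₁τ
    have hms : s ∈ Set.Ioi τ₀ := lt_of_lt_of_le hT₁τ hs1
    have hm2 : T₁ + 1 ∈ Set.Ioi τ₀ := by simpa using lt_trans hT₁τ (by linarith)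
    rcases hμ with h | h
    · exact abs_le_max_abs_abs (h hm1 hms hs1) (h hms hm2 hs2)
    · rw [max_comm]
      exact abs_le_max_abs_abs (h hms hm2 hs2) (h hm1 hms hs1)
  obtain ⟨Mg, hMg⟩ := ucBoundAux g τ₀ T₁ hT₁τ hg
  set M : ℝ := max |μ T₁| |μ (T₁ + 1)| + Mg with hMdef
  have hφbound : ∀ s : ℝ, T₁ ≤ s → s ≤ T₁ + 1 → |φ s| ≤ M := by
    intro s hs1 hs2
    have hms : s ∈ Set.Ioi τ₀ := lt_of_lt_of_le hT₁τ hs1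
    rw [hdecomp s hms]
    calc |μ s + g s| ≤ |μ s| + |g s| := abs_add_le _ _
      _ ≤ M := add_le_add (hμbound s hs1 hs2) (hMg s hs1 hs2)
  -- induction: |φ t| ≤ M + n * (ε/2) for t ∈ [T₁, T₁+1+n]
  have key : ∀ n : ℕ, ∀ t : ℝ, T₁ ≤ t → t ≤ T₁ + 1 + n → |φ t| ≤ M + n * (ε / 2) := by
    intro n
    induction n with
    | zero => intro t h1 h2; simpa using hφbound t h1 (by push_cast at h2; linarith)
    | succ n ih =>
      intro t h1 h2
      by_cases hc : t ≤ T₁ + 1 + n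
      · have := ih t h1 hc
        have : M + n * (ε / 2) ≤ M + (n + 1 : ℕ) * (ε / 2) := by push_cast; nlinarith
        linarith [ih t h1 hc]
      · push_neg at hc
        have h1' : T₁ ≤ t - 1 := by push_cast at hc; nlinarith [Nat.cast_nonneg (α := ℝ) n]
        have h2' : t - 1 ≤ T₁ + 1 + n := by push_cast at h2 ⊢; linarith
        have := ih (t - 1) h1' h2'
        have hstep := hinc (t - 1) (le_trans hT₁T₀ h1')
        rw [sub_add_cancel] at hstep
        have habs : |φ t| ≤ |φ (t - 1)| + |φ t - φ (t - 1)| := by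
          calc |φ t| = |φ (t - 1) + (φ t - φ (t - 1))| := by ring_nf
            _ ≤ _ := abs_add_le _ _
        push_cast
        linarith
  refine ⟨max (T₁ + 1) (2 * M / ε - T₁), fun t ht => ?_⟩
  have ht1 : T₁ + 1 ≤ t := le_trans (le_max_left _ _) ht
  have ht2 : 2 * M / ε - T₁ ≤ t := le_trans (le_max_right _ _) ht
  have htM : 2 * M ≤ ε * (t + T₁) := by
    rw [sub_le_iff_le_add] at ht2
    rw [div_le_iff₀ hε] at ht2
    nlinarith
  set n : ℕ := ⌈t - T₁ - 1⌉₊ with hn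
  have hnn : (0 : ℝ) ≤ t - T₁ - 1 := by linarith
  have hle : t - T₁ - 1 ≤ n := Nat.le_ceil _
  have hlt : (n : ℝ) < t - T₁ - 1 + 1 := Nat.ceil_lt_add_one hnn
  have hb := key n t (by linarith) (by linarith)
  have : M + n * (ε / 2) < M + (t - T₁) * (ε / 2) := by nlinarith
  nlinarith
end

section
/- For an integer p ≥ 2, there is a constant c > 0 such that for all sufficiently large v, p^{−v}/v² ≤ c · ( p^{−v}/v − (p−1) Σ_{n=v+1}^∞ p^{−n}/n ). -/
/-- for an integer `p ≥ 2`, eventually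
`p^{-v}/v² ≤ c · (p^{-v}/v − (p−1) Σ_{n>v} p^{-n}/n)`. -/
theorem stmt_5 (p : ℕ) (hp : 2 ≤ p) :
    ∃ c : ℝ, 0 < c ∧ ∃ V : ℕ, ∀ v : ℕ, V ≤ v →
      ((p : ℝ))⁻¹ ^ v / (v : ℝ) ^ 2 ≤
        c * (((p : ℝ))⁻¹ ^ v / (v : ℝ) -
          ((p : ℝ) - 1) * ∑' n : ℕ, ((p : ℝ))⁻¹ ^ (v + 1 + n) / ((v : ℝ) + 1 + (n : ℝ))) := by
  refine ⟨2, by norm_num, 1, fun v hv => ?_⟩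
  have hp2 : (2:ℝ) ≤ (p:ℝ) := by exact_mod_cast hp
  have hp0 : (0:ℝ) < (p:ℝ) := by linarith
  set q : ℝ := ((p:ℝ))⁻¹ with hq
  have hq0 : 0 < q := by positivity
  have hq1 : q < 1 := by
    rw [hq]
    rw [inv_lt_one_iff₀]
    right; linarith
  have hv1 : (1:ℝ) ≤ (v:ℝ) := by exact_mod_cast hv
  have hv0 : (0:ℝ) < (v:ℝ) := by linarith
  have hgeo : Summable (fun n : ℕ => q ^ n) := summable_geometric_of_lt_one hq0.le hq1
  have hsum2 : Summable (fun n : ℕ => q ^ (v+1+n) / ((v:ℝ)+1)) := by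
    have := hgeo.mul_left (q ^ (v+1) / ((v:ℝ)+1))
    refine this.congr fun n => ?_
    rw [pow_add]
    ring
  have hle : ∀ n : ℕ, q ^ (v+1+n) / ((v:ℝ)+1+(n:ℝ)) ≤ q ^ (v+1+n) / ((v:ℝ)+1) := by
    intro n
    apply div_le_div_of_nonneg_left (by positivity) (by linarith)
    have : (0:ℝ) ≤ (n:ℝ) := Nat.cast_nonneg n
    linarith
  have hsum1 : Summable (fun n : ℕ => q ^ (v+1+n) / ((v:ℝ)+1+(n:ℝ))) :=
    Summable.of_nonneg_of_le (fun n => by positivity) hle hsum2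
  have hT : ∑' n : ℕ, q ^ (v+1+n) / ((v:ℝ)+1+(n:ℝ)) ≤ q^(v+1) / ((v:ℝ)+1) * (1-q)⁻¹ := by
    calc ∑' n : ℕ, q ^ (v+1+n) / ((v:ℝ)+1+(n:ℝ))
        ≤ ∑' n : ℕ, q ^ (v+1+n) / ((v:ℝ)+1) := Summable.tsum_le_tsum hle hsum1 hsum2
      _ = q^(v+1) / ((v:ℝ)+1) * ∑' n : ℕ, q ^ n := by
          rw [← tsum_mul_left]
          congr 1; ext n; rw [pow_add]; ring
      _ = q^(v+1) / ((v:ℝ)+1) * (1-q)⁻¹ := by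
          rw [tsum_geometric_of_lt_one hq0.le hq1]
  have h1q : 1 - q = ((p:ℝ)-1) * q := by
    rw [hq]; field_simp
  have hPT : ((p:ℝ)-1) * (∑' n : ℕ, q ^ (v+1+n) / ((v:ℝ)+1+(n:ℝ))) ≤ q^v / ((v:ℝ)+1) := by
    have hkey : ((p:ℝ)-1) * (q^(v+1) / ((v:ℝ)+1) * (1-q)⁻¹) = q^v / ((v:ℝ)+1) := by
      rw [h1q, pow_succ]
      have hpne : ((p:ℝ)-1) ≠ 0 := by linarith
      field_simp
    calc ((p:ℝ)-1) * (∑' n : ℕ, q ^ (v+1+n) / ((v:ℝ)+1+(n:ℝ)))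
        ≤ ((p:ℝ)-1) * (q^(v+1) / ((v:ℝ)+1) * (1-q)⁻¹) := by
          apply mul_le_mul_of_nonneg_left hT (by linarith)
      _ = q^v / ((v:ℝ)+1) := hkey
  have hA : 0 < q^v := pow_pos hq0 v
  have key : q^v/(v:ℝ)^2 ≤ 2*(q^v/(v:ℝ) - q^v/((v:ℝ)+1)) := by
    have h : q^v/(v:ℝ) - q^v/((v:ℝ)+1) = q^v/((v:ℝ)*((v:ℝ)+1)) := by
      field_simp; ring
    have h2 : 2*(q^v/((v:ℝ)*((v:ℝ)+1))) = (2*q^v)/((v:ℝ)*((v:ℝ)+1)) := by ring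
    rw [h, h2, div_le_div_iff₀ (by positivity) (by positivity)]
    nlinarith [mul_nonneg hA.le hv0.le, mul_nonneg (mul_nonneg hA.le hv0.le) hv0.le]
  linarith
end

section
/- Let (X,ρ) be a metric space and ζ : ℝ≥0 → ℝ≥0 a monotone nondecreasing function with ζ(0)=0, ζ(r)>0 for r>0, and lim_{r→0} ζ(λr)/ζ(r) = λ^D for all λ>0 and some D>0. Let k_ζ be the Carathéodory/Hausdorff-type outer measure built from the gauge S ↦ ζ(diam S). Then k_ζ is scale-covariant: for any map λ̂ : X → X with ρ(λ̂x, λ̂y) = λρ(x,y) for all x,y (λ > 0 fixed), k_ζ(λ̂(A)) = λ^D k_ζ(A) for every A ⊆ X. -/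
/-!
A map `f` with `dist (f x) (f y) = l * dist x y` multiplies diameters by `l`, so pulling the
Carathéodory construction with gauge `m` back along `f` gives the construction with gauge
`d ↦ m (l * d)`. Regular variation says `ζ (l * r) / ζ r → l ^ D` as `r → 0⁺`, so near `0` the
gauges `ζ (l * ·)` and `ζ` are comparable with any constant above `l ^ D`, and `ζ` and `ζ (l * ·)`
with any constant above `l ^ (-D)`. As `mkMetric` only sees the gauge near `0`, these comparisons
survive the construction, and they squeeze `k_{ζ (l * ·)}` to `l ^ D • k_ζ`.
-/

open scoped NNReal ENNReal Topology
open MeasureTheory OuterMeasure Filter Metric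

theorem NNReal.nhdsNE_zero : 𝓝[≠] (0 : ℝ≥0) = 𝓝[>] 0 := by
  congr 1
  ext r
  simp [pos_iff_ne_zero]

theorem NNReal.eventually_le_mul_of_tendsto_div {α : Type*} {l : Filter α} {φ ψ : α → ℝ≥0}
    {c c' : ℝ≥0} (hc : c ≠ 0) (hcc' : c < c')
    (h : Tendsto (fun a => (φ a : ℝ) / ψ a) l (𝓝 c)) : ∀ᶠ a in l, φ a ≤ c' * ψ a := by
  filter_upwards [h.eventually (Ioo_mem_nhds (by positivity) (NNReal.coe_lt_coe.2 hcc'))]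
    with a ⟨hpos, hlt⟩
  have hψ : (0 : ℝ) < ψ a := by
    refine (ψ a).coe_nonneg.lt_of_ne' fun h0 => ?_
    simp [h0] at hpos
  exact_mod_cast ((div_lt_iff₀ hψ).mp hlt).le

theorem ediam_image_of_edist_eq_mul {X Y : Type*} [PseudoEMetricSpace X] [PseudoEMetricSpace Y]
    {f : X → Y} {L : ℝ≥0} (hL : L ≠ 0) (hf : ∀ x y, edist (f x) (f y) = L * edist x y)
    (s : Set X) : ediam (f '' s) = L * ediam s := by
  have hanti : AntilipschitzWith L⁻¹ f := fun x y => by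
    rw [hf, ENNReal.coe_inv hL, ← mul_assoc, ENNReal.inv_mul_cancel (by simpa) ENNReal.coe_ne_top,
      one_mul]
  refine (LipschitzWith.ediam_image_le (fun x y => (hf x y).le) s).antisymm ?_
  apply ENNReal.mul_le_of_le_div'
  rw [div_eq_mul_inv, mul_comm, ← ENNReal.coe_inv hL]
  exact hanti.le_mul_ediam_image s

namespace MeasureTheory.OuterMeasure

variable {X Y : Type*} [EMetricSpace X] [EMetricSpace Y]

theorem mkMetric_congr {m₁ m₂ : ℝ≥0∞ → ℝ≥0∞} (h : m₁ =ᶠ[𝓝 0] m₂) :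
    (mkMetric m₁ : OuterMeasure X) = mkMetric m₂ :=
  (mkMetric_mono h.le).antisymm (mkMetric_mono h.symm.le)

theorem comap_mkMetric_of_edist_eq_mul (m : ℝ≥0∞ → ℝ≥0∞) (hm : Monotone m) {f : X → Y}
    {L : ℝ≥0} (hL : L ≠ 0) (hf : ∀ x y, edist (f x) (f y) = L * edist x y) :
    comap f (mkMetric m) = mkMetric fun d => m (L * d) := by
  have hL' : (L : ℝ≥0∞) ≠ 0 := by simpa
  have hext_mono (ε : ℝ≥0∞) : Monotone fun s : {s : Set Y // s.Nonempty} =>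
      extend (fun t (_ : ediam t ≤ ε) => m (ediam t)) (s : Set Y) := by
    intro s t hst
    simp only [extend, le_iInf_iff]
    intro ht
    apply le_trans _ (hm (ediam_mono hst))
    simp only [(ediam_mono hst).trans ht, le_refl, ciInf_pos]
  have hpre (ε : ℝ≥0∞) : comap f (mkMetric'.pre (fun s => m (ediam s)) ε) =
      mkMetric'.pre (fun s => m (L * ediam s)) (ε / L) := by
    rw [mkMetric'.pre, mkMetric'.pre, comap_boundedBy _ (Or.inl (hext_mono ε))]
    congr with s : 1
    apply extend_congr
    · rw [ediam_image_of_edist_eq_mul hL hf,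
        ENNReal.le_div_iff_mul_le (Or.inl hL') (Or.inl ENNReal.coe_ne_top), mul_comm]
    · intros; rw [ediam_image_of_edist_eq_mul hL hf]
  simp only [mkMetric, mkMetric', OuterMeasure.comap_iSup, hpre]
  refine le_antisymm (iSup₂_le fun ε hε => ?_) (iSup₂_le fun ε hε => ?_)
  · exact le_iSup₂_of_le (ε / L) (ENNReal.div_pos hε.ne' ENNReal.coe_ne_top) le_rfl
  · refine le_iSup₂_of_le (ε * L) (ENNReal.mul_pos hε.ne' hL') ?_
    rw [ENNReal.mul_div_cancel_right hL' ENNReal.coe_ne_top]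

theorem comap_mkMetric_toNNReal_of_edist_eq_mul {ζ : ℝ≥0 → ℝ≥0} (hζ : Monotone ζ) {f : X → Y}
    {L : ℝ≥0} (hL : L ≠ 0) (hf : ∀ x y, edist (f x) (f y) = L * edist x y) :
    comap f (mkMetric fun d => (ζ d.toNNReal : ℝ≥0∞)) =
      mkMetric fun d => (ζ (L * d.toNNReal) : ℝ≥0∞) := by
  -- `d ↦ ζ d.toNNReal` is not monotone (it sends `∞` to `ζ 0`); `g` is, with the same germ at `0`.
  set g : ℝ≥0∞ → ℝ≥0∞ := fun d => ζ (min d 1).toNNReal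
  have hg : Monotone g := fun a b hab => by
    have hb : min b 1 ≠ ∞ := ne_top_of_le_ne_top ENNReal.one_ne_top (min_le_right _ _)
    simp only [g]
    exact_mod_cast hζ (ENNReal.toNNReal_mono hb (min_le_min_right 1 hab))
  have hgerm : g =ᶠ[𝓝 0] fun d => ζ d.toNNReal := by
    filter_upwards [Iic_mem_nhds zero_lt_one] with d hd
    simp only [g, min_eq_left (Set.mem_Iic.mp hd)]
  have hmul : Tendsto (fun d : ℝ≥0∞ => (L : ℝ≥0∞) * d) (𝓝 0) (𝓝 0) := by
    simpa using ENNReal.Tendsto.const_mul (tendsto_id (x := 𝓝 (0 : ℝ≥0∞)))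
      (Or.inr ENNReal.coe_ne_top)
  have hgerm_mul : (fun d => g (L * d)) =ᶠ[𝓝 0] fun d => ζ (L * d.toNNReal) := by
    filter_upwards [hmul.eventually hgerm] with d hd
    rw [hd, ENNReal.toNNReal_mul, ENNReal.toNNReal_coe]
  rw [← mkMetric_congr hgerm, comap_mkMetric_of_edist_eq_mul g hg hL hf, mkMetric_congr hgerm_mul]

theorem mkMetric_le_smul_of_forall_gt {m₁ m₂ : ℝ≥0∞ → ℝ≥0∞} {c : ℝ≥0} (hc : c ≠ 0)
    (h : ∀ c' : ℝ≥0, c < c' → ∀ᶠ d in 𝓝 0, m₁ d ≤ c' * m₂ d) :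
    (mkMetric m₁ : OuterMeasure X) ≤ (c : ℝ≥0∞) • mkMetric m₂ := by
  intro s
  refine ENNReal.le_mul_of_forall_lt (Or.inl (by simpa)) (Or.inl ENNReal.coe_ne_top)
    fun a ha b hb => ?_
  rcases eq_or_ne a ∞ with rfl | ha'
  · rw [ENNReal.top_mul (ne_bot_of_gt hb)]
    exact le_top
  lift a to ℝ≥0 using ha'
  calc mkMetric m₁ s ≤ ((a : ℝ≥0∞) • (mkMetric m₂ : OuterMeasure X)) s :=
        mkMetric_mono_smul ENNReal.coe_ne_top (by simpa using (ne_bot_of_gt ha))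
          ((h a (by exact_mod_cast ha)).filter_mono nhdsWithin_le_nhds) s
    _ ≤ a * b := mul_le_mul_right hb.le _

theorem mkMetric_le_smul_of_tendsto_div {φ ψ : ℝ≥0 → ℝ≥0} (hφ : φ 0 = 0) {c : ℝ≥0} (hc : c ≠ 0)
    (h : Tendsto (fun r => (φ r : ℝ) / ψ r) (𝓝[>] 0) (𝓝 c)) :
    (mkMetric (fun d => (φ d.toNNReal : ℝ≥0∞)) : OuterMeasure X) ≤
      (c : ℝ≥0∞) • mkMetric fun d => (ψ d.toNNReal : ℝ≥0∞) := by
  refine mkMetric_le_smul_of_forall_gt hc fun c' hc' => ?_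
  have hnear : ∀ᶠ r in 𝓝 (0 : ℝ≥0), φ r ≤ c' * ψ r := by
    rw [← nhdsNE_sup_pure, eventually_sup, eventually_pure, hφ, NNReal.nhdsNE_zero]
    exact ⟨NNReal.eventually_le_mul_of_tendsto_div hc hc' h, zero_le⟩
  filter_upwards [(ENNReal.tendsto_toNNReal ENNReal.zero_ne_top).eventually hnear] with d hd
  exact_mod_cast hd

theorem mkMetric_eq_smul_of_tendsto_div {φ ψ : ℝ≥0 → ℝ≥0} (hφ : φ 0 = 0) (hψ : ψ 0 = 0)
    {c : ℝ≥0} (hc : c ≠ 0) (h : Tendsto (fun r => (φ r : ℝ) / ψ r) (𝓝[>] 0) (𝓝 c)) :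
    (mkMetric (fun d => (φ d.toNNReal : ℝ≥0∞)) : OuterMeasure X) =
      (c : ℝ≥0∞) • mkMetric fun d => (ψ d.toNNReal : ℝ≥0∞) := by
  have h_inv : Tendsto (fun r => (ψ r : ℝ) / φ r) (𝓝[>] 0) (𝓝 (c⁻¹ : ℝ≥0)) := by
    simpa only [inv_div, NNReal.coe_inv] using h.inv₀ (NNReal.coe_ne_zero.2 hc)
  have hc' : (c : ℝ≥0∞) ≠ 0 := by simpa
  refine (mkMetric_le_smul_of_tendsto_div hφ hc h).antisymm ?_
  calc (c : ℝ≥0∞) • (mkMetric fun d => (ψ d.toNNReal : ℝ≥0∞) : OuterMeasure X)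
      ≤ (c : ℝ≥0∞) • ((c⁻¹ : ℝ≥0) : ℝ≥0∞) • mkMetric fun d => (φ d.toNNReal : ℝ≥0∞) :=
        fun s => mul_le_mul_right (mkMetric_le_smul_of_tendsto_div hψ (inv_ne_zero hc) h_inv s) _
    _ = mkMetric fun d => (φ d.toNNReal : ℝ≥0∞) := by
        rw [smul_smul, ENNReal.coe_inv hc, ENNReal.mul_inv_cancel hc' ENNReal.coe_ne_top, one_smul]

end MeasureTheory.OuterMeasure

theorem stmt_13_general {X : Type*} [MetricSpace X]
    (ζ : NNReal → NNReal) (hmono : Monotone ζ) (h0 : ζ 0 = 0)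
    (D : ℝ)
    (hreg : ∀ c : NNReal, 0 < c → Filter.Tendsto
      (fun r : NNReal => (ζ (c * r) : ℝ) / (ζ r : ℝ))
      (nhdsWithin 0 (Set.Ioi 0)) (nhds ((c : ℝ) ^ D)))
    (μ : MeasureTheory.OuterMeasure X)
    (hμ : μ = MeasureTheory.OuterMeasure.mkMetric
      (fun d : ENNReal => (ζ d.toNNReal : ENNReal)))
    (l : ℝ) (hl : 0 < l) (f : X → X)
    (hf : ∀ x y : X, dist (f x) (f y) = l * dist x y) :
    ∀ A : Set X, μ (f '' A) = ENNReal.ofReal (l ^ D) * μ A := by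
  intro A
  lift l to ℝ≥0 using hl.le
  have hl₀ : l ≠ 0 := by exact_mod_cast hl.ne'
  have hfe (x y : X) : edist (f x) (f y) = l * edist x y := by
    rw [edist_dist, edist_dist, hf, ENNReal.ofReal_mul l.coe_nonneg, ENNReal.ofReal_coe_nnreal]
  have hscale := mkMetric_eq_smul_of_tendsto_div (X := X) (φ := fun r => ζ (l * r))
    (by simp [h0]) h0 (c := l ^ D) (by positivity)
    (by simpa only [NNReal.coe_rpow] using hreg l hl)
  rw [hμ, ← comap_apply, comap_mkMetric_toNNReal_of_edist_eq_mul hmono hl₀ hfe, hscale,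
    smul_apply, smul_eq_mul, ← NNReal.coe_rpow, ENNReal.ofReal_coe_nnreal]

/-- the Carathéodory outer measure built from a gauge `ζ` that is regularly
varying at 0 with index `D > 0` is scale-covariant: `k_ζ(λ̂(A)) = λ^D · k_ζ(A)`. -/
theorem stmt_13 {X : Type*} [MetricSpace X]
    (ζ : NNReal → NNReal) (hmono : Monotone ζ) (h0 : ζ 0 = 0)
    (hpos : ∀ r : NNReal, 0 < r → 0 < ζ r)
    (D : ℝ) (hD : 0 < D)
    (hreg : ∀ c : NNReal, 0 < c → Filter.Tendsto
      (fun r : NNReal => (ζ (c * r) : ℝ) / (ζ r : ℝ))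
      (nhdsWithin 0 (Set.Ioi 0)) (nhds ((c : ℝ) ^ D)))
    (μ : MeasureTheory.OuterMeasure X)
    (hμ : μ = MeasureTheory.OuterMeasure.mkMetric
      (fun d : ENNReal => (ζ d.toNNReal : ENNReal)))
    (l : ℝ) (hl : 0 < l) (f : X → X)
    (hf : ∀ x y : X, dist (f x) (f y) = l * dist x y) :
    ∀ A : Set X, μ (f '' A) = ENNReal.ofReal (l ^ D) * μ A :=
  stmt_13_general ζ hmono h0 D hreg μ hμ l hl f hf
end

section
/- Let ζ : ℝ≥0 → ℝ≥0 be a gauge that is regularly varying at 0 with index D = 0 (i.e., lim_{r→0} ζ(λr)/ζ(r) = 1 for all λ > 0, ζ monotone nondecreasing, ζ(r)>0 for r>0, ζ(0)=0). If Φ : (X,ρ) → (Y,d) is bi-Lipschitz onto its image, then the Carathéodory outer measures satisfy k_ζ(Φ(A)) = k_ζ(A) for all A ⊆ X, provided additionally that for every ε>0 and all sufficiently small r, r' with r ≤ e^C r' one has ζ(r) ≤ e^ε ζ(r'). In simplified form: if k_ζ is the gauge measure with ζ(r) = 1/log(1/r) (for small r), then k_ζ(Φ(A)) = k_ζ(A)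 for every bi-Lipschitz Φ. -/
/-!
A cover of `A` by sets of diameter at most `δ / K` is carried by a `K`-Lipschitz map to a cover
of `f '' A` by sets of diameter at most `δ`, each summand `ζ (diam u)` growing at most to
`ζ (K * diam u)`; pulling covers back through the antilipschitz bound gives the reverse
comparison. For `ζ r = 1 / log (1 / r)` we have `log (1 / (K r)) = log (1 / r) - log K`, so
`ζ (K r) ≤ a ζ r` for every `a > 1` once `r` is small, whence `k_ζ (f '' A) ≤ a k_ζ A` and
`k_ζ A ≤ a k_ζ (f '' A)` for all `a > 1`.
-/

open MeasureTheory Filter Topology Set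
open scoped ENNReal NNReal

/-- The one-sided form of `ζ (K r) / ζ r → 1` as `r → 0`; for monotone `ζ` that is positive
away from `0` it is equivalent to that limit holding for every `K > 0`. -/
def SlowlyVaryingAtZero (ζ : ℝ≥0∞ → ℝ≥0∞) : Prop :=
  ∀ K a : ℝ≥0, 1 < a → ∀ᶠ r in 𝓝 0, ζ (K * r) ≤ a * ζ r

section mkMetric

variable {X Y : Type*} [EMetricSpace X] [EMetricSpace Y]

theorem MeasureTheory.OuterMeasure.mkMetric_le_comp_mul_of_covers {m : ℝ≥0∞ → ℝ≥0∞} (hm : Monotone m)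
    (K : ℝ≥0) {s : Set X} {t : Set Y} (T : Set Y → Set X)
    (hcover : ∀ u : ℕ → Set Y, t ⊆ ⋃ n, u n → s ⊆ ⋃ n, T (u n))
    (hdiam : ∀ u, Metric.ediam (T u) ≤ K * Metric.ediam u)
    (hne : ∀ u, (T u).Nonempty → u.Nonempty) :
    OuterMeasure.mkMetric m s ≤ OuterMeasure.mkMetric (fun r => m (K * r)) t := by
  borelize X Y
  rw [OuterMeasure.coe_mkMetric, OuterMeasure.coe_mkMetric, Measure.mkMetric_apply,
    Measure.mkMetric_apply]
  refine iSup₂_le fun r hr => le_iSup₂_of_le (r / K) (by simp [hr.ne']) ?_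
  refine le_iInf₂ fun u hu => le_iInf fun hur => ?_
  refine iInf₂_le_of_le (fun n => T (u n)) (hcover u hu) (iInf_le_of_le (fun n => ?_) ?_)
  · exact (hdiam _).trans (ENNReal.mul_le_of_le_div' (hur n))
  · exact ENNReal.tsum_le_tsum fun n =>
      iSup_le fun hTn => le_iSup_of_le (hne _ hTn) (hm (hdiam _))

theorem LipschitzWith.mkMetric_image_le {m : ℝ≥0∞ → ℝ≥0∞} (hm : Monotone m) {K : ℝ≥0}
    {f : X → Y} (hf : LipschitzWith K f) (s : Set X) :
    OuterMeasure.mkMetric m (f '' s) ≤ OuterMeasure.mkMetric (fun r => m (K * r)) s :=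
  OuterMeasure.mkMetric_le_comp_mul_of_covers hm K (image f)
    (fun _ hu => (image_mono hu).trans (image_iUnion.subset))
    hf.ediam_image_le (fun _ h => h.of_image)

theorem AntilipschitzWith.mkMetric_le_image {m : ℝ≥0∞ → ℝ≥0∞} (hm : Monotone m) {K : ℝ≥0}
    {f : X → Y} (hf : AntilipschitzWith K f) (s : Set X) :
    OuterMeasure.mkMetric m s ≤ OuterMeasure.mkMetric (fun r => m (K * r)) (f '' s) :=
  OuterMeasure.mkMetric_le_comp_mul_of_covers hm K (preimage f)
    (fun u hu => by rw [← preimage_iUnion]; exact image_subset_iff.1 hu)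
    hf.ediam_preimage_le (fun _ h => nonempty_of_nonempty_preimage h)

theorem MeasureTheory.OuterMeasure.mkMetric_le_of_forall_one_lt {m₁ m₂ : ℝ≥0∞ → ℝ≥0∞}
    (h : ∀ a : ℝ≥0, 1 < a → m₁ ≤ᶠ[𝓝 0] (a : ℝ≥0∞) • m₂) :
    (OuterMeasure.mkMetric m₁ : OuterMeasure X) ≤ OuterMeasure.mkMetric m₂ := by
  intro s
  have hle : ∀ a : ℝ≥0, 1 < a → OuterMeasure.mkMetric m₁ s ≤ a * OuterMeasure.mkMetric m₂ s :=
    fun a ha => OuterMeasure.mkMetric_mono_smul ENNReal.coe_ne_top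
      (ENNReal.coe_ne_zero.2 (one_pos.trans ha).ne') ((h a ha).filter_mono nhdsWithin_le_nhds) s
  have hlim : Tendsto (fun a : ℝ≥0 => (a : ℝ≥0∞) * OuterMeasure.mkMetric m₂ s) (𝓝[>] 1)
      (𝓝 (OuterMeasure.mkMetric m₂ s)) := by
    simpa using ENNReal.Tendsto.mul_const
      (ENNReal.continuous_coe.tendsto 1 |>.mono_left nhdsWithin_le_nhds) (Or.inl one_ne_zero)
  exact ge_of_tendsto hlim (eventually_nhdsWithin_of_forall hle)

theorem SlowlyVaryingAtZero.mkMetric_image_eq {ζ : ℝ≥0∞ → ℝ≥0∞} (hζ : SlowlyVaryingAtZero ζ)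
    (hmono : Monotone ζ) {K K' : ℝ≥0} {f : X → Y} (hlip : LipschitzWith K f)
    (hanti : AntilipschitzWith K' f) (s : Set X) :
    OuterMeasure.mkMetric ζ (f '' s) = OuterMeasure.mkMetric ζ s :=
  le_antisymm
    ((hlip.mkMetric_image_le hmono s).trans
      (OuterMeasure.mkMetric_le_of_forall_one_lt (hζ K) s))
    ((hanti.mkMetric_le_image hmono s).trans
      (OuterMeasure.mkMetric_le_of_forall_one_lt (hζ K') _))

end mkMetric

theorem Real.eventually_one_div_log_one_div_mul_le {k α : ℝ} (hk : 0 < k) (hα : 1 < α) :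
    ∀ᶠ t in 𝓝[>] 0, 1 / Real.log (1 / (k * t)) ≤ α * (1 / Real.log (1 / t)) := by
  have hL : Tendsto (fun t : ℝ => Real.log (1 / t)) (𝓝[>] 0) atTop :=
    (Real.tendsto_log_atTop.comp tendsto_inv_nhdsGT_zero).congr fun t => by simp [one_div]
  filter_upwards [self_mem_nhdsWithin, hL.eventually_gt_atTop 0,
    hL.eventually_ge_atTop (α * Real.log k / (α - 1))] with t (ht : 0 < t) hLpos hLbig
  set L := Real.log (1 / t)
  have hsplit : Real.log (1 / (k * t)) = L - Real.log k := by
    simp only [L, one_div, Real.log_inv, Real.log_mul hk.ne' ht.ne']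
    ring
  have hbig : α * Real.log k ≤ (α - 1) * L := by
    rw [div_le_iff₀ (by linarith)] at hLbig
    linarith
  have hM : 0 < L - Real.log k := by nlinarith
  rw [hsplit, mul_one_div, div_le_div_iff₀ hM hLpos]
  linear_combination hbig

theorem slowlyVaryingAtZero_of_eq_one_div_log {ζ : ℝ≥0∞ → ℝ≥0∞} (hmono : Monotone ζ)
    (hζ : ∀ r : ℝ≥0∞, 0 < r → r < ENNReal.ofReal (Real.exp (-1)) →
      ζ r = ENNReal.ofReal (1 / Real.log (1 / r.toReal))) :
    SlowlyVaryingAtZero ζ := by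
  intro K a ha
  rcases eq_or_ne K 0 with rfl | hK
  · exact Eventually.of_forall fun r => by
      simpa using (hmono zero_le).trans (le_mul_of_one_le_left zero_le (by exact_mod_cast ha.le))
  have hreal : ∀ᶠ t in 𝓝 (0 : ℝ), 0 < t → t < Real.exp (-1) ∧ K * t < Real.exp (-1) ∧
      1 / Real.log (1 / (K * t)) ≤ a * (1 / Real.log (1 / t)) := by
    have hKt : ∀ᶠ t in 𝓝 (0 : ℝ), (K : ℝ) * t < Real.exp (-1) :=
      ((continuous_const_mul (K : ℝ)).tendsto' 0 0 (mul_zero _)).eventually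
        (gt_mem_nhds (Real.exp_pos _))
    filter_upwards [gt_mem_nhds (Real.exp_pos (-1)), hKt, eventually_nhdsWithin_iff.1
      (Real.eventually_one_div_log_one_div_mul_le (NNReal.coe_pos.2 (pos_iff_ne_zero.2 hK))
        (by exact_mod_cast ha))] with t h₁ h₂ h₃ ht using ⟨h₁, h₂, h₃ ht⟩
  have hreal' := (ENNReal.tendsto_toReal ENNReal.zero_ne_top).eventually hreal
  filter_upwards [hreal', gt_mem_nhds ENNReal.zero_lt_top] with r hr hrtop
  rcases eq_or_ne r 0 with rfl | hr0
  · simpa using le_mul_of_one_le_left zero_le (by exact_mod_cast ha.le)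
  obtain ⟨h₁, h₂, h₃⟩ := hr (ENNReal.toReal_pos hr0 hrtop.ne)
  have hKr : (K * r).toReal = K * r.toReal := by simp
  rw [hζ r (pos_iff_ne_zero.2 hr0) ((ENNReal.lt_ofReal_iff_toReal_lt hrtop.ne).2 h₁),
    hζ (K * r) (ENNReal.mul_pos (by simpa using hK) hr0)
      ((ENNReal.lt_ofReal_iff_toReal_lt (ENNReal.mul_ne_top ENNReal.coe_ne_top hrtop.ne)).2
        (hKr ▸ h₂)), hKr, ← ENNReal.ofReal_coe_nnreal, ← ENNReal.ofReal_mul a.coe_nonneg]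
  exact ENNReal.ofReal_le_ofReal h₃

theorem stmt_16_general {X Y : Type*} [MetricSpace X] [MetricSpace Y]
    (ζ : ENNReal → ENNReal) (hmono : Monotone ζ)
    (hζ : ∀ r : ENNReal, 0 < r → r < ENNReal.ofReal (Real.exp (-1)) →
      ζ r = ENNReal.ofReal (1 / Real.log (1 / r.toReal)))
    (f : X → Y) (c C : ℝ) (hc : 0 < c)
    (hlow : ∀ x y : X, c * dist x y ≤ dist (f x) (f y))
    (hup : ∀ x y : X, dist (f x) (f y) ≤ C * dist x y) :
    ∀ A : Set X,
      MeasureTheory.OuterMeasure.mkMetric ζ (f '' A) =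
        MeasureTheory.OuterMeasure.mkMetric ζ A := by
  have hlip : LipschitzWith C.toNNReal f := LipschitzWith.of_dist_le' hup
  have hanti : AntilipschitzWith c.toNNReal⁻¹ f := AntilipschitzWith.of_le_mul_dist fun x y => by
    rw [NNReal.coe_inv, Real.coe_toNNReal _ hc.le, inv_mul_eq_div, le_div_iff₀ hc, mul_comm]
    exact hlow x y
  exact (slowlyVaryingAtZero_of_eq_one_div_log hmono hζ).mkMetric_image_eq hmono hlip hanti

/-- for the slowly varying (index `D = 0`) gauge `ζ(r) = 1/log(1/r)`
(for small `r`, with `ζ 0 = 0`, extended monotonically), the associated Carathéodory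
outer measure is exactly invariant under bi-Lipschitz maps: `k_ζ(Φ(A)) = k_ζ(A)`. -/
theorem stmt_16 {X Y : Type*} [MetricSpace X] [MetricSpace Y]
    (ζ : ENNReal → ENNReal) (hmono : Monotone ζ) (h0 : ζ 0 = 0)
    (hζ : ∀ r : ENNReal, 0 < r → r < ENNReal.ofReal (Real.exp (-1)) →
      ζ r = ENNReal.ofReal (1 / Real.log (1 / r.toReal)))
    (f : X → Y) (c C : ℝ) (hc : 0 < c) (hcC : c ≤ C)
    (hlow : ∀ x y : X, c * dist x y ≤ dist (f x) (f y))
    (hup : ∀ x y : X, dist (f x) (f y) ≤ C * dist x y) :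
    ∀ A : Set X,
      MeasureTheory.OuterMeasure.mkMetric ζ (f '' A) =
        MeasureTheory.OuterMeasure.mkMetric ζ A :=
  stmt_16_general ζ hmono hζ f c C hc hlow hup
end

section
/- Let φ₁, φ₂ : ℤ(p^∞) → ℂ be bounded, |s| < 1, and suppose there exists κ < ∞ and v₀ such that |Υ_s^{φ₁}(x) − Υ_s^{φ₁}(y)| ≥ e^{−κ}|s|^{v(x−y)} whenever v(x−y) ≥ v₀. Then for all x ≠ y with v(x−y) sufficiently large, | |Υ_s^{φ₁}(x)−Υ_s^{φ₁}(y)| − |Υ_s^{φ₂}(x)−Υ_s^{φ₂}(y)| | ≤ (2/(1−|s|)) ‖φ₁−φ₂‖_∞ · |s|^{v(x−y)}, where ‖φ₁−φ₂‖_∞ = sup_{q ∈ ℤ(p^∞)} |φ₁(q) − φ₂(q)|. -/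
/-!
Write `δ = φ₁ − φ₂` and `D = Υ_s^{φ₁} − Υ_s^{φ₂} = Υ_s^δ`. Since `‖δ‖ ≤ E` on the fractional parts,
`‖D z‖ ≤ E |s|^{v(z)} / (1 − |s|)`. By the reverse triangle inequality it suffices to bound
`‖D x − D y‖`. If `|x|_p ≠ |y|_p` then `v(x − y) = min (v x) (v y)` and the bound on each term
suffices. If `|x|_p = |y|_p`, the digits `{x/p^{n+1}}_p` and `{y/p^{n+1}}_p` agree for
`n < v(x − y)`, so the series for `D x` and `D y` agree up to `s^{v(x − y)}` and their difference
is a difference of two tails starting there.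
-/

open Finset

section GeometricTail

lemma hasSum_mul_geometric_of_lt_one {r : ℝ} (hr0 : 0 ≤ r) (hr1 : r < 1) (B : ℝ) (t : ℤ) :
    HasSum (fun k : ℕ => B * r ^ t * r ^ k) (B / (1 - r) * r ^ t) := by
  rw [show B / (1 - r) * r ^ t = B * r ^ t * (1 - r)⁻¹ by ring]
  exact (hasSum_geometric_of_lt_one hr0 hr1).mul_left _

variable {𝕜 : Type*} [NormedField 𝕜] {s : 𝕜} {c : ℕ → 𝕜} {B : ℝ}

lemma norm_mul_zpow_add_le (hs : s ≠ 0) (hc : ∀ k, ‖c k‖ ≤ B) (t : ℤ) (k : ℕ) :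
    ‖c k * s ^ (t + k)‖ ≤ B * ‖s‖ ^ t * ‖s‖ ^ k := by
  rw [norm_mul, zpow_add₀ hs, zpow_natCast, norm_mul, norm_zpow, norm_pow, ← mul_assoc]
  gcongr
  exact hc k

lemma summable_mul_zpow_add [CompleteSpace 𝕜] (hs : s ≠ 0) (hs1 : ‖s‖ < 1)
    (hc : ∀ k, ‖c k‖ ≤ B) (t : ℤ) : Summable fun k : ℕ => c k * s ^ (t + k) :=
  .of_norm_bounded (hasSum_mul_geometric_of_lt_one (norm_nonneg s) hs1 B t).summable
    (norm_mul_zpow_add_le hs hc t)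

lemma norm_tsum_mul_zpow_add_le (hs : s ≠ 0) (hs1 : ‖s‖ < 1) (hc : ∀ k, ‖c k‖ ≤ B) (t : ℤ) :
    ‖∑' k : ℕ, c k * s ^ (t + k)‖ ≤ B / (1 - ‖s‖) * ‖s‖ ^ t :=
  tsum_of_norm_bounded (hasSum_mul_geometric_of_lt_one (norm_nonneg s) hs1 B t)
    (norm_mul_zpow_add_le hs hc t)

end GeometricTail

namespace Padic

variable {p : ℕ} [Fact p.Prime]

lemma le_valuation_iff_norm_le {x : ℚ_[p]} (hx : x ≠ 0) (n : ℤ) :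
    n ≤ x.valuation ↔ ‖x‖ ≤ (p : ℝ) ^ (-n) := by
  rw [norm_eq_zpow_neg_valuation hx, zpow_le_zpow_iff_right₀ (mod_cast (Fact.out : p.Prime).one_lt),
    neg_le_neg_iff]

lemma valuation_le_valuation_iff_norm_le {x y : ℚ_[p]} (hx : x ≠ 0) (hy : y ≠ 0) :
    x.valuation ≤ y.valuation ↔ ‖y‖ ≤ ‖x‖ := by
  rw [le_valuation_iff_norm_le hy, norm_eq_zpow_neg_valuation hx]

/-- A rational number with denominator a power of `p` that is a `p`-adic integer is an integer. -/
lemma intCast_div_pow_eq_zero {m : ℤ} {k : ℕ} (hnorm : ‖((m / p ^ k : ℚ) : ℚ_[p])‖ ≤ 1)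
    (habs : |(m / p ^ k : ℚ)| < 1) : (m / p ^ k : ℚ) = 0 := by
  have hpk : (p : ℚ) ^ k ≠ 0 := pow_ne_zero _ (mod_cast (Fact.out : p.Prime).ne_zero)
  have hm : ‖(m : ℚ_[p])‖ ≤ (p : ℝ) ^ (-k : ℤ) := by
    have : (m : ℚ_[p]) = ((m / p ^ k : ℚ) : ℚ_[p]) * (p : ℚ_[p]) ^ k := by
      push_cast
      rw [div_mul_cancel₀ _ (mod_cast hpk)]
    rw [this, norm_mul, norm_p_pow]
    exact mul_le_of_le_one_left (by positivity) hnorm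
  obtain ⟨t, rfl⟩ := (norm_int_le_pow_iff_dvd m k).mp hm
  have ht : ((p ^ k * t : ℤ) / p ^ k : ℚ) = t := by
    push_cast
    rw [mul_div_cancel_left₀ _ hpk]
  rw [ht] at habs ⊢
  exact_mod_cast Int.abs_lt_one_iff.mp (mod_cast habs)

/-- The `p`-adic fractional part `{x}_p`: the representative of `x` modulo `ℤ_[p]` in
`[0, 1) ∩ ℤ[1/p]`. -/
def IsFracPart (frac : ℚ_[p] → ℚ) : Prop :=
  ∀ x : ℚ_[p], (0 ≤ frac x ∧ frac x < 1) ∧ ‖x - (frac x : ℚ_[p])‖ ≤ 1 ∧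
    ∃ l k : ℕ, frac x = (l : ℚ) / (p : ℚ) ^ k

namespace IsFracPart

variable {frac : ℚ_[p] → ℚ}

lemma eq_of_norm_sub_le_one (hfrac : IsFracPart frac) {a b : ℚ_[p]} (hab : ‖a - b‖ ≤ 1) :
    frac a = frac b := by
  obtain ⟨⟨ha0, ha1⟩, hna, l, k, hl⟩ := hfrac a
  obtain ⟨⟨hb0, hb1⟩, hnb, l', k', hl'⟩ := hfrac b
  have hdiff : frac a - frac b = ((l * p ^ k' - l' * p ^ k : ℤ) : ℚ) / p ^ (k + k') := by
    have hp : (p : ℚ) ≠ 0 := mod_cast (Fact.out : p.Prime).ne_zero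
    rw [hl, hl']
    push_cast
    field_simp
    ring
  have hnorm : ‖((frac a - frac b : ℚ) : ℚ_[p])‖ ≤ 1 := by
    have : ((frac a - frac b : ℚ) : ℚ_[p]) = (a - b) + ((frac a - a) + (b - frac b)) := by
      push_cast
      ring
    rw [norm_sub_rev] at hna
    rw [this]
    exact (nonarchimedean _ _).trans
      (max_le hab ((nonarchimedean _ _).trans (max_le hna hnb)))
  rw [hdiff] at hnorm
  rw [← sub_eq_zero, hdiff]
  exact intCast_div_pow_eq_zero hnorm (hdiff ▸ abs_lt.mpr ⟨by linarith, by linarith⟩)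

lemma eq_of_le_valuation_sub (hfrac : IsFracPart frac) {x y : ℚ_[p]} (hxy : x ≠ y) {n : ℤ}
    (hn : n ≤ (x - y).valuation) : frac (x / (p : ℚ_[p]) ^ n) = frac (y / (p : ℚ_[p]) ^ n) := by
  refine hfrac.eq_of_norm_sub_le_one ?_
  rw [← sub_div, norm_div, norm_p_zpow, div_le_one (zpow_pos (mod_cast (Fact.out : p.Prime).pos) _),
    ← le_valuation_iff_norm_le (sub_ne_zero.mpr hxy)]
  exact hn

lemma norm_apply_le_sSup {E : Type*} [Norm E] (hfrac : IsFracPart frac) {φ : ℚ → E}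
    (hφ : ∃ M, ∀ q, ‖φ q‖ ≤ M) (z : ℚ_[p]) :
    ‖φ (frac z)‖ ≤ sSup {r : ℝ | ∃ l k : ℕ, l < p ^ k ∧ r = ‖φ ((l : ℚ) / (p : ℚ) ^ k)‖} := by
  obtain ⟨M, hM⟩ := hφ
  obtain ⟨⟨-, hlt⟩, -, l, k, hlk⟩ := hfrac z
  rw [hlk, div_lt_one (pow_pos (mod_cast (Fact.out : p.Prime).pos) _)] at hlt
  rw [hlk]
  exact le_csSup ⟨M, by rintro r ⟨l, k, -, rfl⟩; exact hM _⟩ ⟨l, k, by exact_mod_cast hlt, rfl⟩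

end IsFracPart

/-- `Σ_{n ≥ v} φ({x/p^{n+1}}_p) s^n`; thus `Υ_s^φ(x) = fracSeries frac φ s x.valuation x`
for `x ≠ 0`. -/
noncomputable def fracSeries (frac : ℚ_[p] → ℚ) (φ : ℚ → ℂ) (s : ℂ) (v : ℤ) (x : ℚ_[p]) : ℂ :=
  ∑' k : ℕ, φ (frac (x / (p : ℚ_[p]) ^ (v + (k : ℤ) + 1))) * s ^ (v + (k : ℤ))

section fracSeries

variable {frac : ℚ_[p] → ℚ} {φ φ₁ φ₂ : ℚ → ℂ} {s : ℂ} {B B₁ B₂ : ℝ}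

lemma norm_fracSeries_le (hs : s ≠ 0) (hs1 : ‖s‖ < 1) (hφ : ∀ z, ‖φ (frac z)‖ ≤ B) (v : ℤ)
    (x : ℚ_[p]) : ‖fracSeries frac φ s v x‖ ≤ B / (1 - ‖s‖) * ‖s‖ ^ v :=
  norm_tsum_mul_zpow_add_le hs hs1 (fun _ => hφ _) v

lemma fracSeries_sub (hs : s ≠ 0) (hs1 : ‖s‖ < 1) (hφ₁ : ∀ z, ‖φ₁ (frac z)‖ ≤ B₁)
    (hφ₂ : ∀ z, ‖φ₂ (frac z)‖ ≤ B₂) (v : ℤ) (x : ℚ_[p]) :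
    fracSeries frac φ₁ s v x - fracSeries frac φ₂ s v x = fracSeries frac (φ₁ - φ₂) s v x := by
  rw [fracSeries, fracSeries, ← (summable_mul_zpow_add hs hs1 (fun _ => hφ₁ _) v).tsum_sub
    (summable_mul_zpow_add hs hs1 (fun _ => hφ₂ _) v)]
  simp only [fracSeries, Pi.sub_apply, sub_mul]

lemma fracSeries_eq_sum_add (hs : s ≠ 0) (hs1 : ‖s‖ < 1) (hφ : ∀ z, ‖φ (frac z)‖ ≤ B) (v : ℤ)
    (x : ℚ_[p]) (t : ℕ) :
    fracSeries frac φ s v x = ∑ k ∈ range t,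
      φ (frac (x / (p : ℚ_[p]) ^ (v + (k : ℤ) + 1))) * s ^ (v + (k : ℤ)) +
      fracSeries frac φ s (v + t) x := by
  rw [fracSeries, ← (summable_mul_zpow_add hs hs1 (fun _ => hφ _) v).sum_add_tsum_nat_add t,
    fracSeries]
  congr 1
  refine tsum_congr fun k => ?_
  rw [show v + ((k + t : ℕ) : ℤ) = v + t + k by push_cast; ring]

lemma fracSeries_sub_fracSeries_of_le (hfrac : IsFracPart frac) (hs : s ≠ 0) (hs1 : ‖s‖ < 1)
    (hφ : ∀ z, ‖φ (frac z)‖ ≤ B) {x y : ℚ_[p]} (hxy : x ≠ y) {v : ℤ}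
    (hv : v ≤ (x - y).valuation) :
    fracSeries frac φ s v x - fracSeries frac φ s v y =
      fracSeries frac φ s (x - y).valuation x - fracSeries frac φ s (x - y).valuation y := by
  obtain ⟨t, ht⟩ : ∃ t : ℕ, (x - y).valuation = v + t := ⟨((x - y).valuation - v).toNat, by omega⟩
  rw [ht, fracSeries_eq_sum_add hs hs1 hφ v x t, fracSeries_eq_sum_add hs hs1 hφ v y t,
    sum_congr rfl fun k hk => by
      rw [hfrac.eq_of_le_valuation_sub hxy (by rw [mem_range] at hk; omega)]]
  ring

end fracSeries

section distance

variable {frac : ℚ_[p] → ℚ} {φ : ℚ → ℂ} {s : ℂ} {B : ℝ} {Υ : ℚ_[p] → ℂ}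

lemma norm_le_of_eq_fracSeries (hs : s ≠ 0) (hs1 : ‖s‖ < 1) (hφ : ∀ z, ‖φ (frac z)‖ ≤ B)
    (h0 : Υ 0 = 0) (hΥ : ∀ x, x ≠ 0 → Υ x = fracSeries frac φ s x.valuation x)
    {z a : ℚ_[p]} (ha : a ≠ 0) (hz : ‖z‖ ≤ ‖a‖) :
    ‖Υ z‖ ≤ B / (1 - ‖s‖) * ‖s‖ ^ a.valuation := by
  have hC : 0 ≤ B / (1 - ‖s‖) := div_nonneg ((norm_nonneg _).trans (hφ 0)) (by linarith)
  by_cases hz0 : z = 0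
  · rw [hz0, h0, norm_zero]
    exact mul_nonneg hC (by positivity)
  rw [hΥ z hz0]
  refine (norm_fracSeries_le hs hs1 hφ _ _).trans (mul_le_mul_of_nonneg_left ?_ hC)
  exact zpow_le_zpow_right_of_le_one₀ (norm_pos_iff.mpr hs) hs1.le
    ((valuation_le_valuation_iff_norm_le ha hz0).mpr hz)

lemma norm_sub_le_of_eq_fracSeries (hfrac : IsFracPart frac) (hs : s ≠ 0) (hs1 : ‖s‖ < 1)
    (hφ : ∀ z, ‖φ (frac z)‖ ≤ B) (h0 : Υ 0 = 0)
    (hΥ : ∀ x, x ≠ 0 → Υ x = fracSeries frac φ s x.valuation x) {x y : ℚ_[p]} (hxy : x ≠ y) :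
    ‖Υ x - Υ y‖ ≤ 2 / (1 - ‖s‖) * B * ‖s‖ ^ (x - y).valuation := by
  have hxy' : x - y ≠ 0 := sub_ne_zero.mpr hxy
  rw [show 2 / (1 - ‖s‖) * B * ‖s‖ ^ (x - y).valuation =
    B / (1 - ‖s‖) * ‖s‖ ^ (x - y).valuation + B / (1 - ‖s‖) * ‖s‖ ^ (x - y).valuation by ring]
  by_cases hn : ‖x‖ = ‖y‖
  · have hx : x ≠ 0 := by
      rintro rfl
      exact hxy (norm_eq_zero.mp (hn.symm.trans norm_zero)).symm
    have hy : y ≠ 0 := by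
      rintro rfl
      exact hxy (norm_eq_zero.mp (hn.trans norm_zero))
    have hv : y.valuation = x.valuation :=
      le_antisymm ((valuation_le_valuation_iff_norm_le hy hx).mpr hn.le)
        ((valuation_le_valuation_iff_norm_le hx hy).mpr hn.ge)
    have hle : x.valuation ≤ (x - y).valuation := by
      refine (valuation_le_valuation_iff_norm_le hx hxy').mpr ?_
      simpa [sub_eq_add_neg, hn] using IsUltrametricDist.norm_add_le_max x (-y)
    rw [hΥ x hx, hΥ y hy, hv, fracSeries_sub_fracSeries_of_le hfrac hs hs1 hφ hxy hle]
    exact norm_sub_le_of_le (norm_fracSeries_le hs hs1 hφ _ _) (norm_fracSeries_le hs hs1 hφ _ _)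
  · have hmax : ‖x - y‖ = max ‖x‖ ‖y‖ := by
      simpa [sub_eq_add_neg] using
        IsUltrametricDist.norm_add_eq_max_of_norm_ne_norm (y := -y) (by rwa [norm_neg])
    exact norm_sub_le_of_le
      (norm_le_of_eq_fracSeries hs hs1 hφ h0 hΥ hxy' (hmax ▸ le_max_left _ _))
      (norm_le_of_eq_fracSeries hs hs1 hφ h0 hΥ hxy' (hmax ▸ le_max_right _ _))

end distance

end Padic

theorem stmt_18_general (p : ℕ) [Fact p.Prime]
    (frac : ℚ_[p] → ℚ)
    (hfrac : ∀ x : ℚ_[p], (0 ≤ frac x ∧ frac x < 1) ∧ ‖x - (frac x : ℚ_[p])‖ ≤ 1 ∧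
      ∃ l k : ℕ, frac x = (l : ℚ) / (p : ℚ) ^ k)
    (φ₁ φ₂ : ℚ → ℂ)
    (hb₁ : ∃ M : ℝ, ∀ q : ℚ, ‖φ₁ q‖ ≤ M) (hb₂ : ∃ M : ℝ, ∀ q : ℚ, ‖φ₂ q‖ ≤ M)
    (s : ℂ) (hs0 : 0 < ‖s‖) (hs1 : ‖s‖ < 1)
    (Υ₁ Υ₂ : ℚ_[p] → ℂ) (hΥ₁0 : Υ₁ 0 = 0) (hΥ₂0 : Υ₂ 0 = 0)
    (hΥ₁ : ∀ x : ℚ_[p], x ≠ 0 → Υ₁ x = ∑' k : ℕ,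
      φ₁ (frac (x / (p : ℚ_[p]) ^ (x.valuation + (k : ℤ) + 1))) * s ^ (x.valuation + (k : ℤ)))
    (hΥ₂ : ∀ x : ℚ_[p], x ≠ 0 → Υ₂ x = ∑' k : ℕ,
      φ₂ (frac (x / (p : ℚ_[p]) ^ (x.valuation + (k : ℤ) + 1))) * s ^ (x.valuation + (k : ℤ)))
    (E : ℝ)
    (hE : E = sSup {r : ℝ | ∃ l k : ℕ, l < p ^ k ∧
      r = ‖φ₁ ((l : ℚ) / (p : ℚ) ^ k) - φ₂ ((l : ℚ) / (p : ℚ) ^ k)‖}) :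
    ∃ V : ℤ, ∀ x y : ℚ_[p], x ≠ y → V ≤ (x - y).valuation →
      |‖Υ₁ x - Υ₁ y‖ - ‖Υ₂ x - Υ₂ y‖| ≤
        2 / (1 - ‖s‖) * E * ‖s‖ ^ ((x - y).valuation) := by
  obtain ⟨M₁, hM₁⟩ := hb₁
  obtain ⟨M₂, hM₂⟩ := hb₂
  have hs : s ≠ 0 := norm_pos_iff.mp hs0
  have hδ : ∀ z, ‖(φ₁ - φ₂) (frac z)‖ ≤ E := by
    rw [hE]
    exact Padic.IsFracPart.norm_apply_le_sSup hfrac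
      ⟨M₁ + M₂, fun q => norm_sub_le_of_le (hM₁ q) (hM₂ q)⟩
  have hD (x : ℚ_[p]) (hx : x ≠ 0) :
      Υ₁ x - Υ₂ x = Padic.fracSeries frac (φ₁ - φ₂) s x.valuation x := by
    rw [hΥ₁ x hx, hΥ₂ x hx]
    exact Padic.fracSeries_sub hs hs1 (fun _ => hM₁ _) (fun _ => hM₂ _) _ x
  refine ⟨0, fun x y hxy _ => ?_⟩
  calc |‖Υ₁ x - Υ₁ y‖ - ‖Υ₂ x - Υ₂ y‖| ≤ ‖(Υ₁ x - Υ₂ x) - (Υ₁ y - Υ₂ y)‖ := by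
        rw [sub_sub_sub_comm]
        exact abs_norm_sub_norm_le _ _
    _ ≤ 2 / (1 - ‖s‖) * E * ‖s‖ ^ ((x - y).valuation) :=
        Padic.norm_sub_le_of_eq_fracSeries (Υ := fun z => Υ₁ z - Υ₂ z) hfrac hs hs1 hδ
          (by rw [hΥ₁0, hΥ₂0, sub_self]) hD hxy

/-- Lemma 2: comparison of the distance functions of `Υ_s^{φ₁}` and
`Υ_s^{φ₂}` in terms of `‖φ₁ − φ₂‖_∞` over `ℤ(p^∞)`. -/
theorem stmt_18 (p : ℕ) [Fact p.Prime]
    (frac : ℚ_[p] → ℚ)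
    (hfrac : ∀ x : ℚ_[p], (0 ≤ frac x ∧ frac x < 1) ∧ ‖x - (frac x : ℚ_[p])‖ ≤ 1 ∧
      ∃ l k : ℕ, frac x = (l : ℚ) / (p : ℚ) ^ k)
    (φ₁ φ₂ : ℚ → ℂ)
    (hb₁ : ∃ M : ℝ, ∀ q : ℚ, ‖φ₁ q‖ ≤ M) (hb₂ : ∃ M : ℝ, ∀ q : ℚ, ‖φ₂ q‖ ≤ M)
    (s : ℂ) (hs0 : 0 < ‖s‖) (hs1 : ‖s‖ < 1)
    (Υ₁ Υ₂ : ℚ_[p] → ℂ) (hΥ₁0 : Υ₁ 0 = 0) (hΥ₂0 : Υ₂ 0 = 0)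
    (hΥ₁ : ∀ x : ℚ_[p], x ≠ 0 → Υ₁ x = ∑' k : ℕ,
      φ₁ (frac (x / (p : ℚ_[p]) ^ (x.valuation + (k : ℤ) + 1))) * s ^ (x.valuation + (k : ℤ)))
    (hΥ₂ : ∀ x : ℚ_[p], x ≠ 0 → Υ₂ x = ∑' k : ℕ,
      φ₂ (frac (x / (p : ℚ_[p]) ^ (x.valuation + (k : ℤ) + 1))) * s ^ (x.valuation + (k : ℤ)))
    (κ : ℝ) (v₀ : ℤ)
    (hlow : ∀ x y : ℚ_[p], x ≠ y → v₀ ≤ (x - y).valuation →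
      Real.exp (-κ) * ‖s‖ ^ ((x - y).valuation) ≤ ‖Υ₁ x - Υ₁ y‖)
    (E : ℝ)
    (hE : E = sSup {r : ℝ | ∃ l k : ℕ, l < p ^ k ∧
      r = ‖φ₁ ((l : ℚ) / (p : ℚ) ^ k) - φ₂ ((l : ℚ) / (p : ℚ) ^ k)‖}) :
    ∃ V : ℤ, ∀ x y : ℚ_[p], x ≠ y → V ≤ (x - y).valuation →
      |‖Υ₁ x - Υ₁ y‖ - ‖Υ₂ x - Υ₂ y‖| ≤
        2 / (1 - ‖s‖) * E * ‖s‖ ^ ((x - y).valuation) :=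
  stmt_18_general p frac hfrac φ₁ φ₂ hb₁ hb₂ s hs0 hs1 Υ₁ Υ₂ hΥ₁0 hΥ₂0 hΥ₁ hΥ₂ E hE
end
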